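/- Under the extended gradient Gibbs measure μ̃, conditionally on the gradient variables (η_b), the conductances (κ_b) are independent across edges, with the conditional law of κ_b given by e^{V(η_b) - κ_b η_b²/2} ρ(dκ_b). -/
import Mathlib


open MeasureTheory Real Filter ProbabilityTheory
open scoped ENNReal

set_option maxHeartbeats 1000000
set_option synthInstance.maxHeartbeats 400000

noncomputable section

variable {d : ℕ}
/-- Positively oriented edges of `ℤ^d`: a base point together with a direction. -/
abbrev EdgeZ (d : ℕ) := ((Fin d → ℤ) × Fin d)

/-- Configurations indexed by (positively oriented) edges: gradients or conductances. -/
abbrev Cfg (d : ℕ) := EdgeZ d → ℝ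

/-- `sv j n` is `n` times the `j`-th coordinate unit vector of `ℤ^d`. -/
def sv (j : Fin d) (n : ℤ) : Fin d → ℤ := fun i => if i = j then n else 0

/-- Shift of a configuration by a lattice vector `x`. -/
def shf (x : Fin d → ℤ) (κ : Cfg d) : Cfg d := fun e => κ (e.1 + x, e.2)

/-- Translation invariance of a measure on configurations. -/
def TInv (ν : Measure (Cfg d)) : Prop := ∀ x, ν.map (shf x) = ν

/-- Ergodicity with respect to the group of lattice shifts. -/
def Erg (ν : Measure (Cfg d)) : Prop :=
  ∀ A : Set (Cfg d), MeasurableSet A → (∀ x, shf x ⁻¹' A = A) → ν A = 0 ∨ ν A = 1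

/-- Uniform ellipticity: `ε ≤ κ_b ≤ 1/ε` almost surely. -/
def Elliptic (ν : Measure (Cfg d)) : Prop :=
  ∃ ε : ℝ, 0 < ε ∧ ∀ᵐ κ ∂ν, ∀ e, ε ≤ κ e ∧ κ e ≤ 1 / ε

/-- Signed sum of gradients along the coordinate axis `j`, from `base` to
`base + n·ê_j`. -/
def lineSum (η : Cfg d) (base : Fin d → ℤ) (j : Fin d) : ℤ → ℝ
  | Int.ofNat n => ∑ k ∈ Finset.range n, η (base + sv j (k : ℤ), j)
  | Int.negSucc m => -∑ k ∈ Finset.range (m + 1), η (base - sv j ((k : ℤ) + 1), j)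

/-- The height field reconstructed from a gradient configuration by integrating
along the coordinate staircase path from the origin; `fieldOf η 0 = 0`. -/
def fieldOf (η : Cfg d) (x : Fin d → ℤ) : ℝ :=
  ∑ j : Fin d, lineSum η (fun i => if (i : ℕ) < (j : ℕ) then x i else 0) j (x j)

/-- The gradient configuration of a height field. -/
def gradOf (φ : (Fin d → ℤ) → ℝ) : Cfg d := fun e => φ (e.1 + sv e.2 1) - φ e.1

/-- The loop (plaquette) condition: `η` is the gradient of some height field. -/
def LoopCond (η : Cfg d) : Prop := gradOf (fieldOf η) = η

/-- The potential `V(η) = -log ∫ ρ(dκ) e^{-κ η²/2}`. -/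
def pot (ρ : Measure ℝ) (x : ℝ) : ℝ := -Real.log (∫ κ, Real.exp (-(κ * x ^ 2) / 2) ∂ρ)

/-- The edges having at least one endpoint in the finite set `Λ`. -/
def incEdges (Λ : Finset (Fin d → ℤ)) : Finset (EdgeZ d) :=
  Λ ×ˢ (Finset.univ : Finset (Fin d)) ∪
    (Λ ×ˢ (Finset.univ : Finset (Fin d))).image fun e => (e.1 - sv e.2 1, e.2)

/-- The Hamiltonian in `Λ`: the sum of `V` over all edges touching `Λ`. -/
def ener (V : ℝ → ℝ) (Λ : Finset (Fin d → ℤ)) (φ : (Fin d → ℤ) → ℝ) : ℝ :=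
  ∑ e ∈ incEdges Λ, V (φ (e.1 + sv e.2 1) - φ e.1)

/-- Overwrite a height field on `Λ` by the values `ζ`. -/
def ow (Λ : Finset (Fin d → ℤ)) (φ : (Fin d → ℤ) → ℝ) (ζ : Λ → ℝ) :
    (Fin d → ℤ) → ℝ :=
  fun x => if h : x ∈ Λ then ζ ⟨x, h⟩ else φ x

/-- `μ` is a gradient Gibbs measure for the potential `V`: it is supported on
gradient configurations, and in every finite volume `Λ` its conditional law given
the outside is the Gibbs specification with Hamiltonian `Σ V(∇φ)` and Lebesgue
a priori measure (expressed in DLR form against bounded measurable observables). -/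
def IsGGM (V : ℝ → ℝ) (μ : Measure (Cfg d)) : Prop :=
  (∀ᵐ η ∂μ, LoopCond η) ∧
  ∀ (Λ : Finset (Fin d → ℤ)) (F : Cfg d → ℝ), Measurable F → (∃ C, ∀ η, |F η| ≤ C) →
    ∫ η, F η ∂μ =
      ∫ η,
        (∫ ζ : Λ → ℝ,
            Real.exp (-ener V Λ (ow Λ (fieldOf η) ζ)) * F (gradOf (ow Λ (fieldOf η) ζ))
            ∂(Measure.pi fun _ : Λ => (volume : Measure ℝ))) /
        (∫ ζ : Λ → ℝ,
            Real.exp (-ener V Λ (ow Λ (fieldOf η) ζ))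
            ∂(Measure.pi fun _ : Λ => (volume : Measure ℝ))) ∂μ

/-- Zero tilt: `E_μ(η_b) = 0` for every edge `b`. -/
def ZeroTilt (μ : Measure (Cfg d)) : Prop := ∀ e : EdgeZ d, ∫ η, η e ∂μ = 0

/-- `ρ` is a (nonzero) measure with compact support contained in `(0,∞)`. -/
def CompactSupportPos (ρ : Measure ℝ) : Prop :=
  ρ ≠ 0 ∧ ∃ a b : ℝ, 0 < a ∧ a ≤ b ∧ ρ ((Set.Icc a b)ᶜ) = 0

/-- `μ̃` is the extension of the gradient Gibbs measure `μ` to joint configurations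
`(η, κ)`: its `η`-marginal is `μ` and its finite-dimensional `κ`-marginals are
given by `∏_{b∈Λ} e^{V(η_b) - κ_b η_b²/2} ρ(dκ_b)`. -/
def IsExtension (ρ : Measure ℝ) (V : ℝ → ℝ) (μ : Measure (Cfg d))
    (μt : Measure (Cfg d × Cfg d)) : Prop :=
  μt.map Prod.fst = μ ∧
  ∀ (Λ : Finset (EdgeZ d)) (A : Set (Cfg d)) (B : Set (Λ → ℝ)),
    MeasurableSet A → MeasurableSet B →
    μt {p | p.1 ∈ A ∧ (fun b : Λ => p.2 b.1) ∈ B} =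
      ∫⁻ κΛ in B,
        ∫⁻ η in A,
          ∏ b : Λ, ENNReal.ofReal (Real.exp (V (η b.1) - κΛ b * (η b.1) ^ 2 / 2)) ∂μ
        ∂(Measure.pi fun _ : Λ => ρ)

lemma countable_generatePiSystem {α : Type*} {S : Set (Set α)} (hS : S.Countable) :
    (generatePiSystem S).Countable := by
  have h : generatePiSystem S ⊆ Set.sInter '' {T : Set (Set α) | T.Finite ∧ T ⊆ S} := by
    intro s hs
    induction hs with
    | base h => exact ⟨{_}, ⟨Set.finite_singleton _, by simpa using h⟩, by simp⟩
    | inter _ _ _ ihs iht =>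
      obtain ⟨T1, ⟨hf1, hs1⟩, he1⟩ := ihs
      obtain ⟨T2, ⟨hf2, hs2⟩, he2⟩ := iht
      exact ⟨T1 ∪ T2, ⟨hf1.union hf2, Set.union_subset hs1 hs2⟩,
        by rw [Set.sInter_union, ← he1, ← he2]⟩
  exact Set.Countable.mono h ((Set.countable_setOf_finite_subset hS).image _)

/-- Lemma: conditional law of the conductances given the
gradients.  Under the extended gradient Gibbs measure `μ̃`, conditionally on the
gradient variables `η`, the conductances are independent across edges with the law
of `κ_b` given by `e^{V(η_b) - κ_b η_b²/2} ρ(dκ_b)`; i.e. for `μ̃`-a.e. `η`, every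
finite-dimensional marginal of the conditional kernel is the corresponding product
measure. -/
theorem conditional_conductances_product
    (ρ : Measure ℝ) [IsFiniteMeasure ρ] (hρ : CompactSupportPos ρ)
    (μ : Measure (Cfg d)) [IsProbabilityMeasure μ]
    (hGibbs : IsGGM (pot ρ) μ)
    (μt : Measure (Cfg d × Cfg d)) [IsProbabilityMeasure μt]
    (hext : IsExtension ρ (pot ρ) μ μt)
    (K : Kernel (Cfg d) (Cfg d)) [IsMarkovKernel K]
    (hK : ∀ (A : Set (Cfg d)) (B : Set (Cfg d)), MeasurableSet A → MeasurableSet B →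
      μt (A ×ˢ B) = ∫⁻ η in A, K η B ∂(μt.map Prod.fst)) :
    ∀ᵐ η ∂(μt.map Prod.fst),
      ∀ (Λ : Finset (EdgeZ d)) (B : Set (Λ → ℝ)), MeasurableSet B →
        K η {κ : Cfg d | (fun b : Λ => κ b.1) ∈ B} =
          ∫⁻ κΛ in B,
            ∏ b : Λ, ENNReal.ofReal (Real.exp (pot ρ (η b.1) - κΛ b * (η b.1) ^ 2 / 2))
            ∂(Measure.pi fun _ : Λ => ρ) := by
  obtain ⟨hmarg, hfdd⟩ := hext
  have hpot : Measurable (pot ρ) := by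
    have hI : StronglyMeasurable fun x : ℝ => ∫ κ, Real.exp (-(κ * x ^ 2) / 2) ∂ρ :=
      (Continuous.stronglyMeasurable (by fun_prop)).integral_prod_right'
        (f := fun p : ℝ × ℝ => Real.exp (-(p.2 * p.1 ^ 2) / 2))
    exact (Real.measurable_log.comp hI.measurable).neg
  rw [hmarg] at hK ⊢
  have key : ∀ Λ : Finset (EdgeZ d),
      ∀ᵐ η ∂μ, ∀ B : Set (Λ → ℝ), MeasurableSet B →
        K η {κ : Cfg d | (fun b : Λ => κ b.1) ∈ B} =
          ∫⁻ κΛ in B,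
            ∏ b : Λ, ENNReal.ofReal (Real.exp (pot ρ (η b.1) - κΛ b * (η b.1) ^ 2 / 2))
            ∂(Measure.pi fun _ : Λ => ρ) := by
    intro Λ
    set prj : Cfg d → (Λ → ℝ) := fun κ b => κ b.1 with hprjdef
    have hprj : Measurable prj := measurable_pi_lambda _ fun b => measurable_pi_apply _
    set dens : Cfg d → (Λ → ℝ) → ℝ≥0∞ := fun η κΛ =>
      ∏ b : Λ, ENNReal.ofReal (Real.exp (pot ρ (η b.1) - κΛ b * (η b.1) ^ 2 / 2)) with hdens
    have hF : Measurable (Function.uncurry dens) := by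
      refine Finset.measurable_prod _ fun b _ => Measurable.ennreal_ofReal
        (Real.measurable_exp.comp (Measurable.sub
          (hpot.comp ((measurable_pi_apply b.1).comp measurable_fst))
          (Measurable.div_const (Measurable.mul
            ((measurable_pi_apply b).comp measurable_snd)
            (Measurable.pow_const ((measurable_pi_apply b.1).comp measurable_fst) 2)) 2)))
    have step1 : ∀ B : Set (Λ → ℝ), MeasurableSet B →
        ∀ᵐ η ∂μ, K η (prj ⁻¹' B) = ∫⁻ κΛ in B, dens η κΛ ∂(Measure.pi fun _ : Λ => ρ) := by
      intro B hB
      apply ae_eq_of_forall_setLIntegral_eq_of_sigmaFinite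
      · exact K.measurable_coe (hprj hB)
      · exact hF.lintegral_prod_right' (ν := (Measure.pi fun _ : Λ => ρ).restrict B)
      · intro A hA _
        have h1 : ∫⁻ η in A, K η (prj ⁻¹' B) ∂μ = μt (A ×ˢ (prj ⁻¹' B)) :=
          (hK A (prj ⁻¹' B) hA (hprj hB)).symm
        have h2 : μt (A ×ˢ (prj ⁻¹' B)) = μt {p | p.1 ∈ A ∧ (fun b : Λ => p.2 b.1) ∈ B} := rfl
        have h4 := lintegral_lintegral_swap
          (μ := (Measure.pi fun _ : Λ => ρ).restrict B) (ν := μ.restrict A)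
          (f := fun κΛ η => dens η κΛ) ((hF.comp measurable_swap).aemeasurable)
        rw [h1, h2, hfdd Λ A B hA hB, h4]
    have hSc : (generatePiSystem (MeasurableSpace.countableGeneratingSet (Λ → ℝ))).Countable :=
      countable_generatePiSystem MeasurableSpace.countable_countableGeneratingSet
    set S := generatePiSystem (MeasurableSpace.countableGeneratingSet (Λ → ℝ)) with hSdef
    have hSmeas : ∀ s ∈ S, MeasurableSet s := fun s hs =>
      generatePiSystem_measurableSet
        (fun t ht => MeasurableSpace.measurableSet_countableGeneratingSet ht) s hs
    have hgen : (inferInstance : MeasurableSpace (Λ → ℝ)) = MeasurableSpace.generateFrom S := by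
      rw [hSdef, generateFrom_generatePiSystem_eq,
        MeasurableSpace.generateFrom_countableGeneratingSet]
    have hae : ∀ᵐ η ∂μ,
        (∀ s ∈ S, K η (prj ⁻¹' s) = ∫⁻ κΛ in s, dens η κΛ ∂(Measure.pi fun _ : Λ => ρ)) ∧
        K η (prj ⁻¹' (Set.univ : Set (Λ → ℝ))) =
          ∫⁻ κΛ in (Set.univ : Set (Λ → ℝ)), dens η κΛ ∂(Measure.pi fun _ : Λ => ρ) := by
      refine ((ae_ball_iff hSc).2 fun s hs => step1 s (hSmeas s hs)).and
        (step1 Set.univ MeasurableSet.univ)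
    filter_upwards [hae] with η hη B hB
    obtain ⟨hηS, hηuniv⟩ := hη
    haveI : IsProbabilityMeasure (K η) := IsMarkovKernel.isProbabilityMeasure η
    haveI : IsProbabilityMeasure ((K η).map prj) := Measure.isProbabilityMeasure_map hprj.aemeasurable
    set μ2 : Measure (Λ → ℝ) := (Measure.pi fun _ : Λ => ρ).withDensity (dens η) with hμ2
    haveI : IsFiniteMeasure μ2 := by
      constructor
      rw [hμ2, withDensity_apply _ MeasurableSet.univ, ← hηuniv]
      exact measure_lt_top _ _
    have heq : (K η).map prj = μ2 := by
      refine MeasureTheory.ext_of_generate_finite S hgen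
        (isPiSystem_generatePiSystem _) (fun s hs => ?_) ?_
      · rw [Measure.map_apply hprj (hSmeas s hs), hηS s hs, hμ2,
          withDensity_apply _ (hSmeas s hs)]
      · rw [Measure.map_apply hprj MeasurableSet.univ, Set.preimage_univ, ← Set.preimage_univ (f := prj),
          hηuniv, hμ2, withDensity_apply _ MeasurableSet.univ]
    calc K η {κ : Cfg d | (fun b : Λ => κ b.1) ∈ B} = ((K η).map prj) B :=
          (Measure.map_apply hprj hB).symm
      _ = μ2 B := by rw [heq]
      _ = _ := withDensity_apply _ hB
  filter_upwards [ae_all_iff.2 key] with η h Λ B hB using h Λ B hB
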